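/- arXiv:2205.10846 — 3 statements merged into one kernel-verified Lean document; each statement's English description precedes it below -/
import Mathlib

section
/- Let V be a seminormed abelian group and T : V → V a norm non-increasing homomorphism. For z, z' ∈ V with ‖T^m(z) − T^m(z')‖ ≤ C for all m (for some constant C ≥ 0), the limits lim_{m→∞} ‖T^m(z) − z‖/m and lim_{m→∞} ‖T^m(z') − z'‖/m are equal. -/
/-!
A norm non-increasing homomorphism is a nonexpansive map, so by the triangle inequality the
displacement `n ↦ dist (f^[n] x) x` is subadditive and Fekete's lemma gives the limit of
`dist (f^[n] x) x / n`. Changing the basepoint from `x` to `y` moves the displacement by at most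
`dist (f^[n] x) (f^[n] y) + dist x y ≤ 2 * dist x y`, a bounded amount that vanishes after
dividing by `n`.
-/

open Filter Topology

theorem Filter.Tendsto.div_natCast_of_abs_sub_le {a b : ℕ → ℝ} {K L : ℝ}
    (ha : Tendsto (fun n : ℕ => a n / n) atTop (𝓝 L)) (hab : ∀ n, |a n - b n| ≤ K) :
    Tendsto (fun n : ℕ => b n / n) atTop (𝓝 L) := by
  have hdiff : Tendsto (fun n : ℕ => (a n - b n) / n) atTop (𝓝 0) := by
    refine squeeze_zero_norm (fun n => ?_) (tendsto_const_div_atTop_nhds_zero_nat K)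
    rw [norm_div, Real.norm_eq_abs, RCLike.norm_natCast]
    exact div_le_div_of_nonneg_right (hab n) n.cast_nonneg
  simpa [sub_div] using ha.sub hdiff

namespace LipschitzWith

variable {X : Type*} [PseudoMetricSpace X] {f : X → X}

theorem dist_iterate_le (hf : LipschitzWith 1 f) (n : ℕ) (x y : X) :
    dist (f^[n] x) (f^[n] y) ≤ dist x y := by
  simpa using (hf.iterate n).dist_le_mul x y

theorem subadditive_dist_iterate_self (hf : LipschitzWith 1 f) (x : X) :
    Subadditive fun n => dist (f^[n] x) x := fun m n =>
  calc dist (f^[m + n] x) x ≤ dist (f^[n] (f^[m] x)) (f^[n] x) + dist (f^[n] x) x := by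
        rw [add_comm m n, Function.iterate_add_apply]
        exact dist_triangle _ _ _
    _ ≤ dist (f^[m] x) x + dist (f^[n] x) x := by
        gcongr
        exact hf.dist_iterate_le n _ _

theorem tendsto_dist_iterate_self_div (hf : LipschitzWith 1 f) (x : X) :
    Tendsto (fun n : ℕ => dist (f^[n] x) x / n) atTop
      (𝓝 (hf.subadditive_dist_iterate_self x).lim) :=
  (hf.subadditive_dist_iterate_self x).tendsto_lim ⟨0, by rintro _ ⟨n, rfl⟩; positivity⟩

theorem abs_dist_iterate_self_sub_le (hf : LipschitzWith 1 f) (n : ℕ) (x y : X) :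
    |dist (f^[n] x) x - dist (f^[n] y) y| ≤ 2 * dist x y :=
  calc |dist (f^[n] x) x - dist (f^[n] y) y|
      ≤ dist (f^[n] x) (f^[n] y) + dist x y := dist_dist_dist_le _ _ _ _
    _ ≤ 2 * dist x y := by linarith [hf.dist_iterate_le n x y]

end LipschitzWith

theorem limit_independent_of_basepoint_general {V : Type*} [SeminormedAddCommGroup V]
    (T : V →+ V) (hT : ∀ v, ‖T v‖ ≤ ‖v‖) (z z' : V) :
    ∃ L : ℝ, Tendsto (fun m : ℕ => ‖(⇑T)^[m] z - z‖ / m) atTop (𝓝 L) ∧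
      Tendsto (fun m : ℕ => ‖(⇑T)^[m] z' - z'‖ / m) atTop (𝓝 L) := by
  have hT₁ : LipschitzWith 1 T :=
    AddMonoidHomClass.lipschitz_of_bound_nnnorm T 1 fun v => by simpa [← NNReal.coe_le_coe] using hT v
  simp only [← dist_eq_norm]
  have hz := hT₁.tendsto_dist_iterate_self_div z
  exact ⟨_, hz, hz.div_natCast_of_abs_sub_le (hT₁.abs_dist_iterate_self_sub_le · z z')⟩

/-- If `T` is norm non-increasing and `‖T^m z - T^m z'‖ ≤ C` for all `m`, then the limits
`lim ‖T^m z - z‖ / m` and `lim ‖T^m z' - z'‖ / m` exist and are equal. -/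
theorem limit_independent_of_basepoint {V : Type*} [SeminormedAddCommGroup V]
    (T : V →+ V) (hT : ∀ v, ‖T v‖ ≤ ‖v‖) (z z' : V) (C : ℝ) (hC : 0 ≤ C)
    (hbd : ∀ m : ℕ, ‖(⇑T)^[m] z - (⇑T)^[m] z'‖ ≤ C) :
    ∃ L : ℝ, Tendsto (fun m : ℕ => ‖(⇑T)^[m] z - z‖ / m) atTop (𝓝 L) ∧
      Tendsto (fun m : ℕ => ‖(⇑T)^[m] z' - z'‖ / m) atTop (𝓝 L) :=
  limit_independent_of_basepoint_general T hT z z'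
end

section
/- Let V be a seminormed abelian group, T, S : V → V norm non-increasing homomorphisms, and z ∈ V. If there is a constant C ≥ 0 with ‖T^m(z) − S^m(z)‖ ≤ C for every m ∈ ℕ, then lim_{m→∞} ‖T^m(z) − z‖/m = lim_{m→∞} ‖S^m(z) − z‖/m. -/
/-!
For a nonexpansive map `f`, the displacement `n ↦ dist (f^[n] x) x` is subadditive, since
`dist (f^[m+n] x) x ≤ dist (f^[n] (f^[m] x)) (f^[n] x) + dist (f^[n] x) x`; by Fekete's lemma
`dist (f^[n] x) x / n` converges. A second map whose orbit stays within bounded distance of that of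
`f` has displacement differing by at most that bound, which disappears after dividing by `n`.
-/

open Filter Topology

theorem LipschitzWith.subadditive_dist_iterate {α : Type*} [PseudoMetricSpace α] {f : α → α}
    (hf : LipschitzWith 1 f) (x : α) : Subadditive fun n => dist (f^[n] x) x := by
  intro m n
  calc dist (f^[m + n] x) x
      ≤ dist (f^[n] (f^[m] x)) (f^[n] x) + dist (f^[n] x) x := by
        rw [add_comm m n, Function.iterate_add_apply]
        exact dist_triangle _ _ _
    _ ≤ dist (f^[m] x) x + dist (f^[n] x) x := by
        gcongr
        simpa using (hf.iterate n).dist_le_mul (f^[m] x) x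

theorem LipschitzWith.tendsto_dist_iterate_div {α : Type*} [PseudoMetricSpace α] {f : α → α}
    (hf : LipschitzWith 1 f) (x : α) :
    Tendsto (fun n : ℕ => dist (f^[n] x) x / n) atTop
      (𝓝 (hf.subadditive_dist_iterate x).lim) :=
  (hf.subadditive_dist_iterate x).tendsto_lim ⟨0, by rintro _ ⟨n, rfl⟩; positivity⟩

theorem Filter.Tendsto.div_natCast_of_abs_sub_le_s3 {u v : ℕ → ℝ} {L C : ℝ}
    (hu : Tendsto (fun n : ℕ => u n / n) atTop (𝓝 L)) (huv : ∀ n, |u n - v n| ≤ C) :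
    Tendsto (fun n : ℕ => v n / n) atTop (𝓝 L) := by
  have hdiff : Tendsto (fun n : ℕ => v n / n - u n / n) atTop (𝓝 0) := by
    refine squeeze_zero_norm (fun n => ?_) (tendsto_const_div_atTop_nhds_zero_nat C)
    rw [Real.norm_eq_abs, div_sub_div_same, abs_div, Nat.abs_cast, abs_sub_comm]
    gcongr
    exact huv n
  simpa using hdiff.add hu

theorem LipschitzWith.tendsto_dist_iterate_div_of_dist_iterate_le {α : Type*}
    [PseudoMetricSpace α] {f g : α → α} (hf : LipschitzWith 1 f) (x : α) {C : ℝ}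
    (hfg : ∀ n, dist (f^[n] x) (g^[n] x) ≤ C) :
    Tendsto (fun n : ℕ => dist (g^[n] x) x / n) atTop
      (𝓝 (hf.subadditive_dist_iterate x).lim) :=
  (hf.tendsto_dist_iterate_div x).div_natCast_of_abs_sub_le_s3 fun n =>
    (abs_dist_sub_le _ _ x).trans (hfg n)

theorem limit_independent_of_homotopic_map_general {V : Type*} [SeminormedAddCommGroup V]
    (T S : V →+ V) (hT : ∀ v, ‖T v‖ ≤ ‖v‖) (z : V)
    (C : ℝ) (hbd : ∀ m : ℕ, ‖(⇑T)^[m] z - (⇑S)^[m] z‖ ≤ C) :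
    ∃ L : ℝ, Tendsto (fun m : ℕ => ‖(⇑T)^[m] z - z‖ / m) atTop (𝓝 L) ∧
      Tendsto (fun m : ℕ => ‖(⇑S)^[m] z - z‖ / m) atTop (𝓝 L) := by
  have hT_lip : LipschitzWith 1 T :=
    AddMonoidHomClass.lipschitz_of_bound_nnnorm T 1 fun v => by simpa [← NNReal.coe_le_coe] using hT v
  simp only [← dist_eq_norm] at hbd ⊢
  exact ⟨_, hT_lip.tendsto_dist_iterate_div z,
    hT_lip.tendsto_dist_iterate_div_of_dist_iterate_le z hbd⟩

/-- If `T, S` are norm non-increasing and `‖T^m z - S^m z‖ ≤ C` for all `m`, then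
`lim ‖T^m z - z‖ / m = lim ‖S^m z - z‖ / m`. -/
theorem limit_independent_of_homotopic_map {V : Type*} [SeminormedAddCommGroup V]
    (T S : V →+ V) (hT : ∀ v, ‖T v‖ ≤ ‖v‖) (hS : ∀ v, ‖S v‖ ≤ ‖v‖) (z : V)
    (C : ℝ) (hC : 0 ≤ C) (hbd : ∀ m : ℕ, ‖(⇑T)^[m] z - (⇑S)^[m] z‖ ≤ C) :
    ∃ L : ℝ, Tendsto (fun m : ℕ => ‖(⇑T)^[m] z - z‖ / m) atTop (𝓝 L) ∧
      Tendsto (fun m : ℕ => ‖(⇑S)^[m] z - z‖ / m) atTop (𝓝 L) :=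
  limit_independent_of_homotopic_map_general T S hT z C hbd
end

section
/- Let V be a seminormed abelian group, T : V → V a norm non-increasing homomorphism, z ∈ V, and define L(T) = lim_{m→∞} ‖T^m(z) − z‖/m. Then for every k ∈ ℕ, L(T^k) = k · L(T), where L(T^k) = lim_{m→∞} ‖T^{km}(z) − z‖/m. -/
open Filter Topology

theorem Filter.Tendsto.comp_nat_mul_div_natCast {f : ℕ → ℝ} {L : ℝ}
    (hf : Tendsto (fun m : ℕ => f m / m) atTop (𝓝 L)) (k : ℕ) :
    Tendsto (fun m : ℕ => f (k * m) / m) atTop (𝓝 (k * L)) := by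
  rcases Nat.eq_zero_or_pos k with rfl | hk
  · simpa using tendsto_const_div_atTop_nhds_zero_nat (f 0)
  · have hsub : Tendsto (fun m : ℕ => f (k * m) / ↑(k * m)) atTop (𝓝 L) :=
      hf.comp (tendsto_id.const_mul_atTop' hk)
    refine (hsub.const_mul (k : ℝ)).congr' ?_
    filter_upwards [eventually_ne_atTop 0] with m hm
    have hk' : (k : ℝ) ≠ 0 := by exact_mod_cast hk.ne'
    have hm' : (m : ℝ) ≠ 0 := by exact_mod_cast hm
    push_cast
    field_simp

theorem limit_of_power_general {V : Type*} [SeminormedAddCommGroup V]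
    (T : V →+ V) (z : V) (k : ℕ) (L : ℝ)
    (hL : Tendsto (fun m : ℕ => ‖(⇑T)^[m] z - z‖ / m) atTop (𝓝 L)) :
    Tendsto (fun m : ℕ => ‖(⇑T)^[k * m] z - z‖ / m) atTop (𝓝 (k * L)) :=
  hL.comp_nat_mul_div_natCast k

/-- Homogeneity for positive powers: if `L(T) = lim ‖T^m z - z‖ / m`, then
`L(T^k) = lim ‖T^{km} z - z‖ / m = k · L(T)` for every `k : ℕ`. -/
theorem limit_of_power {V : Type*} [SeminormedAddCommGroup V]
    (T : V →+ V) (hT : ∀ v, ‖T v‖ ≤ ‖v‖) (z : V) (k : ℕ) (L : ℝ)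
    (hL : Tendsto (fun m : ℕ => ‖(⇑T)^[m] z - z‖ / m) atTop (𝓝 L)) :
    Tendsto (fun m : ℕ => ‖(⇑T)^[k * m] z - z‖ / m) atTop (𝓝 (k * L)) :=
  limit_of_power_general T z k L hL
end
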